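/- arXiv:2603.05998 — 6 statements merged into one kernel-verified Lean document; each statement's English description precedes it below -/
import Mathlib

section
/- Let p: ℝ → ℝ be a smooth support function, γ(α) = p(α)(cos α, sin α) + p'(α)(−sin α, cos α) the associated envelope curve, and M the intersection of the tangent lines at angles α₁ and α₂ with 0 < α₂ − α₁ < π. Then the distance l₁ = |M − γ(α₁)| satisfies l₁ = −p'(α₁) + p(α₂)/sin(α₂−α₁) − p(α₁)·cot(α₂−α₁), provided this expression is nonnegative. -/
open Real

/-- The length `l₁` of the tangent segment from the intersection point `M` of the tangent
lines at angles `α₁`, `α₂` to the tangency point `γ(α₁)` equals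
`-p'(α₁) + p(α₂)/sin(α₂-α₁) - p(α₁)·cot(α₂-α₁)`, provided this expression is nonnegative. -/
theorem tangent_segment_length (p : ℝ → ℝ) (hp : ContDiff ℝ (⊤ : ℕ∞) p)
    (α₁ α₂ : ℝ) (h1 : 0 < α₂ - α₁) (h2 : α₂ - α₁ < π)
    (γ₁ γ₂ M₁ M₂ l₁ : ℝ)
    (hγ₁ : γ₁ = p α₁ * cos α₁ - deriv p α₁ * sin α₁)
    (hγ₂ : γ₂ = p α₁ * sin α₁ + deriv p α₁ * cos α₁)
    (hM₁ : M₁ = (p α₁ * sin α₂ - p α₂ * sin α₁) / sin (α₂ - α₁))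
    (hM₂ : M₂ = (p α₂ * cos α₁ - p α₁ * cos α₂) / sin (α₂ - α₁))
    (hl₁ : l₁ = Real.sqrt ((M₁ - γ₁) ^ 2 + (M₂ - γ₂) ^ 2))
    (hnn : 0 ≤ -deriv p α₁ + p α₂ / sin (α₂ - α₁)
        - p α₁ * (cos (α₂ - α₁) / sin (α₂ - α₁))) :
    l₁ = -deriv p α₁ + p α₂ / sin (α₂ - α₁)
        - p α₁ * (cos (α₂ - α₁) / sin (α₂ - α₁)) := by
  have hs : 0 < sin (α₂ - α₁) := Real.sin_pos_of_pos_of_lt_pi h1 h2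
  have hs' : sin (α₂ - α₁) ≠ 0 := ne_of_gt hs
  set L := -deriv p α₁ + p α₂ / sin (α₂ - α₁)
      - p α₁ * (cos (α₂ - α₁) / sin (α₂ - α₁)) with hL
  have key : (M₁ - γ₁) ^ 2 + (M₂ - γ₂) ^ 2 = L ^ 2 := by
    have h1' : M₁ - γ₁ = -L * sin α₁ := by
      rw [hM₁, hγ₁, hL]
      rw [Real.sin_sub, Real.cos_sub] at *
      field_simp
      linear_combination (-(p α₁ * sin α₂ * (sin α₂ * cos α₁ - cos α₂ * sin α₁)⁻¹)) * (sin_sq_add_cos_sq α₁) + (p α₁ * cos α₁) * (mul_inv_cancel₀ hs')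
    have h2' : M₂ - γ₂ = L * cos α₁ := by
      rw [hM₂, hγ₂, hL]
      rw [Real.sin_sub, Real.cos_sub] at *
      field_simp
      linear_combination (p α₁ * cos α₂ * (sin α₂ * cos α₁ - cos α₂ * sin α₁)⁻¹) * (sin_sq_add_cos_sq α₁) + (p α₁ * sin α₁) * (mul_inv_cancel₀ hs')
    rw [h1', h2']
    linear_combination (L^2) * (sin_sq_add_cos_sq α₁)
  rw [hl₁, key, Real.sqrt_sq hnn]
end

section
/- Let p: ℝ → ℝ be smooth, and for 0 < α₂ − α₁ < π define the generating function S(α₁, α₂) = (p(α₁) + p(α₂)) tan((α₂−α₁)/2) − ∫_{α₁}^{α₂} p(α) dα. Then S(α₁,α₂) equals l₁ + l₂ − ∫_{α₁}^{α₂}(p''(α)+p(α)) dα, where l₁ = −p'(α₁) + p(α₂)/sin(α₂−α₁) − p(α₁) cot(α₂−α₁) and l₂ = p'(α₂) + p(α₁)/sin(α₂−α₁) − p(α₂) cot(α₂−α₁). -/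
open Real intervalIntegral

lemma tan_half_aux {θ : ℝ} (h1 : 0 < θ) (h2 : θ < π) :
    tan (θ / 2) = (1 - cos θ) / sin θ := by
  have hc : 0 < Real.cos (θ / 2) := Real.cos_pos_of_mem_Ioo ⟨by linarith [Real.pi_pos], by linarith⟩
  have hs : Real.sin θ ≠ 0 := ne_of_gt (Real.sin_pos_of_pos_of_lt_pi h1 h2)
  have hsin : Real.sin θ = 2 * Real.sin (θ / 2) * Real.cos (θ / 2) := by
    rw [← Real.sin_two_mul]; ring_nf
  have hs2 : Real.sin (θ / 2) ≠ 0 :=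
    ne_of_gt (Real.sin_pos_of_pos_of_lt_pi (by linarith) (by linarith))
  have hcos : 1 - Real.cos θ = 2 * Real.sin (θ / 2) ^ 2 := by
    have h3 : Real.cos (2 * (θ / 2)) = 2 * Real.cos (θ / 2) ^ 2 - 1 := Real.cos_two_mul _
    have h2' := Real.sin_sq_add_cos_sq (θ / 2)
    rw [show 2 * (θ / 2) = θ by ring] at h3
    nlinarith
  rw [Real.tan_eq_sin_div_cos, hsin, hcos]
  field_simp

/-- The generating function `S(α₁,α₂) = (p(α₁)+p(α₂)) tan((α₂-α₁)/2) - ∫ p` equals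
`l₁ + l₂ - arc length`, where the arc length is `∫ (p'' + p)`. -/
theorem generating_function_eq (p : ℝ → ℝ) (hp : ContDiff ℝ (⊤ : ℕ∞) p)
    (α₁ α₂ : ℝ) (h1 : 0 < α₂ - α₁) (h2 : α₂ - α₁ < π)
    (l₁ l₂ : ℝ)
    (hl₁ : l₁ = -deriv p α₁ + p α₂ / sin (α₂ - α₁)
        - p α₁ * (cos (α₂ - α₁) / sin (α₂ - α₁)))
    (hl₂ : l₂ = deriv p α₂ + p α₁ / sin (α₂ - α₁)
        - p α₂ * (cos (α₂ - α₁) / sin (α₂ - α₁))) :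
    (p α₁ + p α₂) * tan ((α₂ - α₁) / 2) - ∫ α in α₁..α₂, p α
      = l₁ + l₂ - ∫ α in α₁..α₂, (deriv (deriv p) α + p α) := by
  have hq : ContDiff ℝ ((⊤ : ℕ∞) : WithTop ℕ∞) p := hp.of_le (by simp)
  have hp' : ∀ x, HasDerivAt (deriv p) (deriv (deriv p) x) x := fun x =>
    ((hq.iterate_deriv 1).differentiable (by simp)).differentiableAt.hasDerivAt
  have hcont : Continuous (deriv (deriv p)) :=
    (hq.iterate_deriv 2).continuous
  have hint : ∫ α in α₁..α₂, deriv (deriv p) α = deriv p α₂ - deriv p α₁ :=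
    intervalIntegral.integral_deriv_eq_sub (fun x _ => (hp' x).differentiableAt)
      (hcont.intervalIntegrable _ _)
  have hsplit : ∫ α in α₁..α₂, (deriv (deriv p) α + p α)
      = (∫ α in α₁..α₂, deriv (deriv p) α) + ∫ α in α₁..α₂, p α :=
    intervalIntegral.integral_add (hcont.intervalIntegrable _ _)
      (hp.continuous.intervalIntegrable _ _)
  rw [hsplit, hint, hl₁, hl₂, tan_half_aux h1 h2]
  have hs : Real.sin (α₂ - α₁) ≠ 0 := ne_of_gt (Real.sin_pos_of_pos_of_lt_pi h1 h2)
  field_simp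
  ring
end

section
/- Let S(α₁,α₂) = (p(α₁)+p(α₂)) tan((α₂−α₁)/2) − ∫_{α₁}^{α₂} p dα with ω = α₂ − α₁ ∈ (0,π). Then the mixed second partial derivative satisfies ∂²S/∂α₁∂α₂ = −(R₁ + R₂)/sin ω, where R₁ = l₁ tan(ω/2), R₂ = l₂ tan(ω/2), and l₁ = −p'(α₁) + p(α₂)/sin ω − p(α₁) cot ω, l₂ = p'(α₂) + p(α₁)/sin ω − p(α₂) cot ω. In particular, if l₁ and l₂ are positive then ∂²S/∂α₁∂α₂ < 0. -/
open Real intervalIntegral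

/-- The mixed second partial derivative of the generating function
`S(α₁,α₂) = (p(α₁)+p(α₂)) tan((α₂-α₁)/2) - ∫_{α₁}^{α₂} p` equals `-(R₁+R₂)/sin ω`,
where `Rᵢ = lᵢ tan(ω/2)`; in particular it is negative when `l₁, l₂ > 0`. -/
theorem generating_function_mixed_second_deriv (p : ℝ → ℝ) (hp : ContDiff ℝ (⊤ : ℕ∞) p)
    (α₁ α₂ ω l₁ l₂ R₁ R₂ : ℝ) (hω : ω = α₂ - α₁) (h1 : 0 < ω) (h2 : ω < π)
    (hl₁ : l₁ = -deriv p α₁ + p α₂ / sin ω - p α₁ * (cos ω / sin ω))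
    (hl₂ : l₂ = deriv p α₂ + p α₁ / sin ω - p α₂ * (cos ω / sin ω))
    (hR₁ : R₁ = l₁ * tan (ω / 2)) (hR₂ : R₂ = l₂ * tan (ω / 2)) :
    deriv (fun b => deriv
        (fun a => (p a + p b) * tan ((b - a) / 2) - ∫ t in a..b, p t) α₁) α₂
      = -(R₁ + R₂) / sin ω
    ∧ (0 < l₁ → 0 < l₂ →
        deriv (fun b => deriv
          (fun a => (p a + p b) * tan ((b - a) / 2) - ∫ t in a..b, p t) α₁) α₂ < 0) := by
  have hpd : Differentiable ℝ p := hp.differentiable (by simp)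
  have hpc : Continuous p := hpd.continuous
  have hx1 : 0 < ω / 2 := by linarith
  have hx2 : ω / 2 < π / 2 := by linarith
  have hc : 0 < cos (ω / 2) := Real.cos_pos_of_mem_Ioo ⟨by linarith [Real.pi_pos], hx2⟩
  have hs : 0 < sin (ω / 2) := Real.sin_pos_of_pos_of_lt_pi hx1 (by linarith [Real.pi_pos])
  have hsinω : sin ω = 2 * sin (ω / 2) * cos (ω / 2) := by
    rw [show ω = 2 * (ω / 2) by ring, Real.sin_two_mul]; ring
  have hcosω : cos ω = 2 * cos (ω / 2) ^ 2 - 1 := by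
    have h := Real.cos_two_mul (ω / 2); rw [show 2 * (ω / 2) = ω by ring] at h; exact h
  have hsinω0 : 0 < sin ω := by rw [hsinω]; positivity
  -- Step A: inner derivative formula
  have stepA : ∀ b : ℝ, cos ((b - α₁) / 2) ≠ 0 →
      deriv (fun a => (p a + p b) * tan ((b - a) / 2) - ∫ t in a..b, p t) α₁
        = deriv p α₁ * tan ((b - α₁) / 2)
          + (p α₁ + p b) * (1 / cos ((b - α₁) / 2) ^ 2 * (-(1 / 2))) - -p α₁ := by
    intro b hcb
    have h2' : HasDerivAt (fun a : ℝ => (b - a) / 2) (-(1/2)) α₁ := by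
      have h := ((hasDerivAt_id α₁).const_sub b).div_const 2
      norm_num at h ⊢
      exact h
    have h3 : HasDerivAt (fun a : ℝ => tan ((b - a) / 2))
        (1 / cos ((b - α₁) / 2) ^ 2 * (-(1/2))) α₁ :=
      by have := (Real.hasDerivAt_tan hcb).comp α₁ h2'; exact this
    have h4 : HasDerivAt (fun a : ℝ => (p a + p b) * tan ((b - a) / 2))
        (deriv p α₁ * tan ((b - α₁) / 2)
          + (p α₁ + p b) * (1 / cos ((b - α₁) / 2) ^ 2 * (-(1/2)))) α₁ :=
      ((hpd α₁).hasDerivAt.add_const (p b)).mul h3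
    have h5 : HasDerivAt (fun a : ℝ => ∫ t in a..b, p t) (-p α₁) α₁ :=
      intervalIntegral.integral_hasDerivAt_left (hpc.intervalIntegrable _ _)
        (hpc.stronglyMeasurableAtFilter _ _) hpc.continuousAt
    exact (h4.sub h5).deriv
  -- the eventual equality near α₂
  have hcω : cos ((α₂ - α₁) / 2) ≠ 0 := by rw [← hω]; exact ne_of_gt hc
  have hev : (fun b => deriv (fun a => (p a + p b) * tan ((b - a) / 2) - ∫ t in a..b, p t) α₁)
      =ᶠ[nhds α₂] fun b => deriv p α₁ * tan ((b - α₁) / 2)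
          + (p α₁ + p b) * (1 / cos ((b - α₁) / 2) ^ 2 * (-(1 / 2))) - -p α₁ := by
    have hcont : ContinuousAt (fun b : ℝ => cos ((b - α₁) / 2)) α₂ := by fun_prop
    filter_upwards [hcont.eventually_ne hcω] with b hb using stepA b hb
  -- Step B: outer derivative
  have hb2 : HasDerivAt (fun b : ℝ => (b - α₁) / 2) (1/2) α₂ := by
    simpa using ((hasDerivAt_id α₂).sub_const α₁).div_const 2
  have htan : HasDerivAt (fun b : ℝ => tan ((b - α₁) / 2))
      (1 / cos ((α₂ - α₁) / 2) ^ 2 * (1/2)) α₂ :=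
    by have := (Real.hasDerivAt_tan hcω).comp α₂ hb2; exact this
  have hcos : HasDerivAt (fun b : ℝ => cos ((b - α₁) / 2))
      (-sin ((α₂ - α₁) / 2) * (1/2)) α₂ :=
    (Real.hasDerivAt_cos _).comp α₂ hb2
  have hcos2 : HasDerivAt (fun b : ℝ => cos ((b - α₁) / 2) ^ 2)
      (2 * cos ((α₂ - α₁) / 2) ^ 1 * (-sin ((α₂ - α₁) / 2) * (1/2))) α₂ := by
    simpa using hcos.fun_pow 2
  have hinv : HasDerivAt (fun b : ℝ => 1 / cos ((b - α₁) / 2) ^ 2 * (-(1/2)))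
      (-(2 * cos ((α₂ - α₁) / 2) ^ 1 * (-sin ((α₂ - α₁) / 2) * (1/2)))
        / (cos ((α₂ - α₁) / 2) ^ 2) ^ 2 * (-(1/2))) α₂ := by
    simpa [one_div] using (hcos2.inv (pow_ne_zero 2 hcω)).mul_const (-(1/2))
  have hG : HasDerivAt (fun b => deriv p α₁ * tan ((b - α₁) / 2)
          + (p α₁ + p b) * (1 / cos ((b - α₁) / 2) ^ 2 * (-(1 / 2))) - -p α₁)
      (deriv p α₁ * (1 / cos ((α₂ - α₁) / 2) ^ 2 * (1/2))
        + ((deriv p α₂) * (1 / cos ((α₂ - α₁) / 2) ^ 2 * (-(1/2)))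
          + (p α₁ + p α₂) * (-(2 * cos ((α₂ - α₁) / 2) ^ 1 * (-sin ((α₂ - α₁) / 2) * (1/2)))
            / (cos ((α₂ - α₁) / 2) ^ 2) ^ 2 * (-(1/2))))) α₂ := by
    simpa using ((htan.const_mul (deriv p α₁)).add
      ((((hpd α₂).hasDerivAt.const_add (p α₁)).mul hinv))).sub_const (-p α₁)
  have hkey : deriv (fun b => deriv
        (fun a => (p a + p b) * tan ((b - a) / 2) - ∫ t in a..b, p t) α₁) α₂
      = -(R₁ + R₂) / sin ω := by
    rw [hev.deriv_eq, hG.deriv]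
    rw [← hω] at *
    rw [hR₁, hR₂, hl₁, hl₂, Real.tan_eq_sin_div_cos, hsinω, hcosω]
    have hc' := hc.ne'
    have hs' := hs.ne'
    field_simp
    linear_combination (-(2 : ℝ) * (p α₁ + p α₂)) *
      Real.sin_sq_add_cos_sq (ω / 2)
  refine ⟨hkey, fun hl1 hl2 => ?_⟩
  rw [hkey]
  have htanpos : 0 < tan (ω / 2) := Real.tan_pos_of_pos_of_lt_pi_div_two hx1 hx2
  have : 0 < R₁ + R₂ := by rw [hR₁, hR₂]; positivity
  exact div_neg_of_neg_of_pos (by linarith) hsinω0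
end

section
/- Let S(α₁,α₂) be as above with ω = α₂−α₁ ∈ (0,π). Then ∂²S/∂α₁² = tan(ω/2) · (R₁ + ρ(α₁)) and ∂²S/∂α₂² = tan(ω/2) · (R₂ + ρ(α₂)), where ρ(α) = p''(α) + p(α) is the curvature radius and R₁, R₂ are as defined by R₁ = l₁ tan(ω/2), R₂ = l₂ tan(ω/2). In particular, if ρ > 0 and l₁, l₂ > 0, then both second partials are strictly positive. -/
open Real intervalIntegral

lemma key (p : ℝ → ℝ) (hp : ContDiff ℝ (⊤ : ℕ∞) p) (α₁ α₂ : ℝ)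
    (h1 : 0 < α₂ - α₁) (h2 : α₂ - α₁ < π) :
    deriv (deriv (fun a => (p a + p α₂) * tan ((α₂ - a) / 2) - ∫ t in a..α₂, p t)) α₁
    = tan ((α₂ - α₁) / 2) *
      ((-deriv p α₁ + p α₂ / sin (α₂ - α₁) - p α₁ * (cos (α₂ - α₁) / sin (α₂ - α₁)))
          * tan ((α₂ - α₁) / 2)
        + (deriv (deriv p) α₁ + p α₁)) := by
  have hp1 : ContDiff ℝ (⊤ : ℕ∞) p := hp.of_le (by simp)
  have hpc : Continuous p := hp1.continuous
  have hp' : ∀ x, HasDerivAt p (deriv p x) x := fun x =>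
    (hp1.differentiable (by simp) x).hasDerivAt
  have hdp : ContDiff ℝ (⊤ : ℕ∞) (deriv p) := by
    have := hp1.iterate_deriv 1
    simpa using this
  have hp'' : ∀ x, HasDerivAt (deriv p) (deriv (deriv p) x) x := fun x =>
    (hdp.differentiable (by simp) x).hasDerivAt
  set g : ℝ → ℝ := fun a =>
    deriv p a * tan ((α₂ - a) / 2) - (p a + p α₂) / (2 * cos ((α₂ - a) / 2) ^ 2) + p a with hg
  have hA : ∀ a : ℝ, HasDerivAt (fun x : ℝ => (α₂ - x) / 2) (-(1/2)) a := by
    intro a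
    exact (((hasDerivAt_id a).const_sub α₂).div_const 2).congr_deriv (by norm_num)
  have hderiv : ∀ a : ℝ, cos ((α₂ - a) / 2) ≠ 0 →
      HasDerivAt (fun a => (p a + p α₂) * tan ((α₂ - a) / 2) - ∫ t in a..α₂, p t) (g a) a := by
    intro a hcos
    have htan : HasDerivAt (fun x : ℝ => tan ((α₂ - x) / 2))
        (1 / cos ((α₂ - a) / 2) ^ 2 * (-(1/2))) a :=
      by have := (Real.hasDerivAt_tan hcos).comp a (hA a); exact this
    have hmul := ((hp' a).add_const (p α₂)).mul htan
    have hint : HasDerivAt (fun x : ℝ => ∫ t in x..α₂, p t) (-p a) a :=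
      intervalIntegral.integral_hasDerivAt_left (hpc.intervalIntegrable _ _)
        (hpc.stronglyMeasurableAtFilter _ _) hpc.continuousAt
    have := hmul.sub hint
    refine this.congr_deriv ?_
    rw [hg]
    field_simp
    ring
  have hmemcos : ∀ᶠ a in nhds α₁, cos ((α₂ - a) / 2) ≠ 0 := by
    have hc : ContinuousAt (fun a : ℝ => cos ((α₂ - a) / 2)) α₁ := by fun_prop
    have hne : cos ((α₂ - α₁) / 2) ≠ 0 := by
      have := Real.cos_pos_of_mem_Ioo (show (α₂ - α₁)/2 ∈ Set.Ioo (-(π/2)) (π/2) by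
        constructor <;> [linarith; linarith])
      linarith
    exact hc.eventually_ne hne
  have hEq : deriv (fun a => (p a + p α₂) * tan ((α₂ - a) / 2) - ∫ t in a..α₂, p t)
      =ᶠ[nhds α₁] g := by
    filter_upwards [hmemcos] with a ha using (hderiv a ha).deriv
  rw [hEq.deriv_eq]
  -- now compute deriv g α₁
  have hcos1 : cos ((α₂ - α₁) / 2) ≠ 0 := by
    have := Real.cos_pos_of_mem_Ioo (show (α₂ - α₁)/2 ∈ Set.Ioo (-(π/2)) (π/2) by
      constructor <;> [linarith; linarith])
    linarith
  have hcosD : HasDerivAt (fun x : ℝ => cos ((α₂ - x) / 2))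
      (-sin ((α₂ - α₁) / 2) * (-(1/2))) α₁ :=
    (Real.hasDerivAt_cos _).comp α₁ (hA α₁)
  have hden : HasDerivAt (fun x : ℝ => 2 * cos ((α₂ - x) / 2) ^ 2)
      (2 * (2 * cos ((α₂ - α₁) / 2) ^ 1 * (-sin ((α₂ - α₁) / 2) * (-(1/2))))) α₁ := by
    exact (hcosD.pow 2).const_mul 2
  have hden0 : 2 * cos ((α₂ - α₁) / 2) ^ 2 ≠ 0 := by positivity
  have htan1 : HasDerivAt (fun x : ℝ => tan ((α₂ - x) / 2))
      (1 / cos ((α₂ - α₁) / 2) ^ 2 * (-(1/2))) α₁ :=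
    by have := (Real.hasDerivAt_tan hcos1).comp α₁ (hA α₁); exact this
  have hG : HasDerivAt g
      ((deriv (deriv p) α₁ * tan ((α₂ - α₁) / 2)
          + deriv p α₁ * (1 / cos ((α₂ - α₁) / 2) ^ 2 * (-(1/2))))
        - ((deriv p α₁ * (2 * cos ((α₂ - α₁) / 2) ^ 2)
            - (p α₁ + p α₂) * (2 * (2 * cos ((α₂ - α₁) / 2) ^ 1
                * (-sin ((α₂ - α₁) / 2) * (-(1/2))))))
            / (2 * cos ((α₂ - α₁) / 2) ^ 2) ^ 2)
        + deriv p α₁) α₁ :=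
    (((hp'' α₁).mul htan1).sub
      (((hp' α₁).add_const (p α₂)).div hden hden0)).add (hp' α₁)
  rw [hG.deriv]
  -- algebra
  have hsin1 : sin ((α₂ - α₁) / 2) ≠ 0 := by
    have := Real.sin_pos_of_pos_of_lt_pi (show 0 < (α₂ - α₁)/2 by linarith)
      (by linarith [Real.pi_pos])
    linarith
  have hω : α₂ - α₁ = 2 * ((α₂ - α₁) / 2) := by ring
  rw [Real.tan_eq_sin_div_cos, hω, Real.sin_two_mul, Real.cos_two_mul]
  have hpy : sin ((α₂ - α₁) / 2) ^ 2 = 1 - cos ((α₂ - α₁) / 2) ^ 2 := by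
    have := Real.sin_sq_add_cos_sq ((α₂ - α₁) / 2)
    linarith
  field_simp
  linear_combination (2 * deriv p α₁ * cos ((α₂ - α₁)/2)) * hpy

lemma key2 (p : ℝ → ℝ) (hp : ContDiff ℝ (⊤ : ℕ∞) p) (α₁ α₂ : ℝ)
    (h1 : 0 < α₂ - α₁) (h2 : α₂ - α₁ < π) :
    deriv (deriv (fun b => (p α₁ + p b) * tan ((b - α₁) / 2) - ∫ t in α₁..b, p t)) α₂
    = tan ((α₂ - α₁) / 2) *
      ((deriv p α₂ + p α₁ / sin (α₂ - α₁) - p α₂ * (cos (α₂ - α₁) / sin (α₂ - α₁)))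
          * tan ((α₂ - α₁) / 2)
        + (deriv (deriv p) α₂ + p α₂)) := by
  set q : ℝ → ℝ := fun t => p (-t) with hqdef
  have hq : ContDiff ℝ (⊤ : ℕ∞) q := hp.comp contDiff_neg
  set F : ℝ → ℝ := fun a => (q a + q (-α₁)) * tan ((-α₁ - a) / 2) - ∫ t in a..(-α₁), q t
    with hFdef
  have funeq : (fun b => (p α₁ + p b) * tan ((b - α₁) / 2) - ∫ t in α₁..b, p t)
      = fun b => F (-b) := by
    funext b
    have hi : (∫ t in (-b)..(-α₁), q t) = ∫ t in α₁..b, p t := by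
      rw [show (∫ t in (-b)..(-α₁), q t) = ∫ t in (-b)..(-α₁), p (-t) from rfl,
        intervalIntegral.integral_comp_neg, neg_neg, neg_neg]
    simp only [hFdef, hi, hqdef, neg_neg]
    rw [show -α₁ - -b = b - α₁ by ring, add_comm (p α₁)]
    congr 1; exact hi.symm
  have hq1 : deriv q (-α₂) = -deriv p α₂ := by
    rw [hqdef, deriv_comp_neg p]
    simp
  have hq2 : deriv (deriv q) (-α₂) = deriv (deriv p) α₂ := by
    have h' : deriv q = fun x => -deriv p (-x) := by
      funext x; rw [hqdef]; exact deriv_comp_neg p x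
    rw [h', deriv.fun_neg, deriv_comp_neg (deriv p)]
    simp
  have step2 : deriv (deriv (fun b => F (-b))) α₂ = deriv (deriv F) (-α₂) := by
    have s1 : deriv (fun b => F (-b)) = fun b => -deriv F (-b) :=
      funext fun b => deriv_comp_neg F b
    rw [s1, deriv.fun_neg, deriv_comp_neg (deriv F)]
    simp
  have hKey := key q hq (-α₂) (-α₁) (by linarith) (by linarith)
  rw [funeq, step2, hFdef]
  rw [hKey, hq1, hq2]
  have e : -α₁ - -α₂ = α₂ - α₁ := by ring
  rw [e]
  simp only [hqdef, neg_neg]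

/-- The pure second partial derivatives of the generating function
`S(α₁,α₂) = (p(α₁)+p(α₂)) tan((α₂-α₁)/2) - ∫_{α₁}^{α₂} p` are
`S₁₁ = tan(ω/2)(R₁ + ρ(α₁))` and `S₂₂ = tan(ω/2)(R₂ + ρ(α₂))`, where `ρ = p'' + p`
is the curvature radius; they are positive when `ρ > 0` and `l₁, l₂ > 0`. -/
theorem generating_function_second_derivs (p : ℝ → ℝ) (hp : ContDiff ℝ (⊤ : ℕ∞) p)
    (α₁ α₂ ω l₁ l₂ R₁ R₂ : ℝ) (hω : ω = α₂ - α₁) (h1 : 0 < ω) (h2 : ω < π)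
    (hl₁ : l₁ = -deriv p α₁ + p α₂ / sin ω - p α₁ * (cos ω / sin ω))
    (hl₂ : l₂ = deriv p α₂ + p α₁ / sin ω - p α₂ * (cos ω / sin ω))
    (hR₁ : R₁ = l₁ * tan (ω / 2)) (hR₂ : R₂ = l₂ * tan (ω / 2))
    (ρ : ℝ → ℝ) (hρ : ∀ a, ρ a = deriv (deriv p) a + p a) :
    (deriv (deriv (fun a => (p a + p α₂) * tan ((α₂ - a) / 2) - ∫ t in a..α₂, p t)) α₁
        = tan (ω / 2) * (R₁ + ρ α₁)
      ∧ deriv (deriv (fun b => (p α₁ + p b) * tan ((b - α₁) / 2) - ∫ t in α₁..b, p t)) α₂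
        = tan (ω / 2) * (R₂ + ρ α₂))
    ∧ ((∀ a, 0 < ρ a) → 0 < l₁ → 0 < l₂ →
        0 < deriv (deriv
            (fun a => (p a + p α₂) * tan ((α₂ - a) / 2) - ∫ t in a..α₂, p t)) α₁
        ∧ 0 < deriv (deriv
            (fun b => (p α₁ + p b) * tan ((b - α₁) / 2) - ∫ t in α₁..b, p t)) α₂) := by
  subst hω
  have E1 : deriv (deriv (fun a => (p a + p α₂) * tan ((α₂ - a) / 2) - ∫ t in a..α₂, p t)) α₁
      = tan ((α₂ - α₁) / 2) * (R₁ + ρ α₁) := by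
    rw [hR₁, hl₁, hρ]
    exact key p hp α₁ α₂ h1 h2
  have E2 : deriv (deriv (fun b => (p α₁ + p b) * tan ((b - α₁) / 2) - ∫ t in α₁..b, p t)) α₂
      = tan ((α₂ - α₁) / 2) * (R₂ + ρ α₂) := by
    rw [hR₂, hl₂, hρ]
    exact key2 p hp α₁ α₂ h1 h2
  refine ⟨⟨E1, E2⟩, fun hρpos hl1 hl2 => ?_⟩
  have htanpos : 0 < tan ((α₂ - α₁) / 2) :=
    Real.tan_pos_of_pos_of_lt_pi_div_two (by linarith) (by linarith)
  constructor
  · rw [E1, hR₁]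
    have := hρpos α₁
    positivity
  · rw [E2, hR₂]
    have := hρpos α₂
    positivity
end

section
/- Let L₁, L₂, L₃ be three lines in the plane with support coordinates (αᵢ, pᵢ) (line equation x cos αᵢ + y sin αᵢ = pᵢ), with 0 < α₂ − α₁ < π and 0 < α₃ − α₂ < π and 0 < α₃ − α₁ < π. Let C₂ be the point on L₂ at which the circle tangent to all three lines (lying on the negative side of L₁ and L₃ and the positive side of L₂) touches L₂. Then the determinant [(cos α₂, sin α₂), C₂] equals [cos²((α₂−α₁)/2)·(p₃+p₂) − cos²((α₃−α₂)/2)·(p₁+p₂)] / [2 sin((α₃−α₁)/2) cos((α₂−α₁)/2) cos((α₃−α₂)/2)]. -/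
open Real

/-- Formula (eq:cr): for three lines `Lᵢ : x cos αᵢ + y sin αᵢ = pᵢ`, the determinant
`[(cos α₂, sin α₂), C₂]`, where `C₂` is the tangency point on `L₂` of the circle tangent
to the three lines, equals the explicit expression in the support coordinates. -/
theorem tangency_point_determinant
    (α₁ α₂ α₃ p₁ p₂ p₃ : ℝ)
    (h12 : 0 < α₂ - α₁) (h12' : α₂ - α₁ < π)
    (h23 : 0 < α₃ - α₂) (h23' : α₃ - α₂ < π)
    (h13 : 0 < α₃ - α₁) (h13' : α₃ - α₁ < π)
    (β₁₅ β₂₅ : ℝ) (hβ₁₅ : β₁₅ = (α₂ - α₁) / 2) (hβ₂₅ : β₂₅ = (α₃ - α₂) / 2)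
    (V₁₅ V₂₅ C₂ : ℝ × ℝ)
    (hV₁₅ : V₁₅ = ((p₁ * sin α₂ - p₂ * sin α₁) / sin (α₂ - α₁),
                   (p₂ * cos α₁ - p₁ * cos α₂) / sin (α₂ - α₁)))
    (hV₂₅ : V₂₅ = ((p₂ * sin α₃ - p₃ * sin α₂) / sin (α₃ - α₂),
                   (p₃ * cos α₂ - p₂ * cos α₃) / sin (α₃ - α₂)))
    (hC₂ : C₂ = ((cos β₁₅ / sin β₁₅) / (cos β₁₅ / sin β₁₅ + cos β₂₅ / sin β₂₅)) • V₂₅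
              + ((cos β₂₅ / sin β₂₅) / (cos β₁₅ / sin β₁₅ + cos β₂₅ / sin β₂₅)) • V₁₅) :
    cos α₂ * C₂.2 - sin α₂ * C₂.1
      = (cos ((α₂ - α₁) / 2) ^ 2 * (p₃ + p₂) - cos ((α₃ - α₂) / 2) ^ 2 * (p₁ + p₂))
        / (2 * sin ((α₃ - α₁) / 2) * cos ((α₂ - α₁) / 2) * cos ((α₃ - α₂) / 2)) := by
  subst hβ₁₅ hβ₂₅ hV₁₅ hV₂₅ hC₂
  set a := (α₂ - α₁) / 2 with ha
  set b := (α₃ - α₂) / 2 with hb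
  have hab : (α₃ - α₁) / 2 = a + b := by rw [ha, hb]; ring
  have hsa : 0 < sin a := sin_pos_of_pos_of_lt_pi (by linarith) (by linarith [pi_pos])
  have hca : 0 < cos a := cos_pos_of_mem_Ioo ⟨by linarith [pi_pos], by rw [ha]; linarith⟩
  have hsb : 0 < sin b := sin_pos_of_pos_of_lt_pi (by linarith) (by linarith [pi_pos])
  have hcb : 0 < cos b := cos_pos_of_mem_Ioo ⟨by linarith [pi_pos], by rw [hb]; linarith⟩
  have hsab : 0 < sin a * cos b + cos a * sin b := by positivity
  have h2a : α₂ - α₁ = 2 * a := by rw [ha]; ring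
  have h2b : α₃ - α₂ = 2 * b := by rw [hb]; ring
  have hα₁ : α₁ = α₂ - 2 * a := by rw [ha]; ring
  have hα₃ : α₃ = α₂ + 2 * b := by rw [hb]; ring
  rw [hab, h2a, h2b]
  simp only [Prod.smul_fst, Prod.smul_snd, Prod.fst_add, Prod.snd_add, smul_eq_mul]
  rw [hα₁, hα₃, sin_add, cos_add, sin_sub, cos_sub,
    sin_two_mul, sin_two_mul, cos_two_mul, cos_two_mul, sin_add]
  field_simp
  ring_nf
  simp only [sin_sq]
  ring
end

section
/- The 1-form λ = cos(α₂−α₁)(dα₁ + dα₂) + dp₁ − dp₂ on ℝ⁴ with coordinates (α₁, α₂, p₁, p₂), restricted to the 3-dimensional submanifold {p₁ + p₂ = sin(α₂−α₁)}, is a contact form wherever sin(α₂−α₁) ≠ 0: its restriction annihilates the vector fields ξ₁ = ∂α₁ − cos(α₂−α₁)∂p₁ and ξ₂ = ∂α₂ + cos(α₂−α₁)∂p₂ but is nonzero on their Lie bracket [ξ₁,ξ₂] = sin(α₂−α₁)(∂p₁ − ∂p₂). -/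
open Real

/-- Lie bracket of vector fields on `ℝⁿ`, `[X,Y]ᵢ = X(Yᵢ) - Y(Xᵢ)`. -/
noncomputable def lieBracket {n : ℕ} (X Y : (Fin n → ℝ) → (Fin n → ℝ)) :
    (Fin n → ℝ) → (Fin n → ℝ) :=
  fun q i => fderiv ℝ (fun z => Y z i) q (X q) - fderiv ℝ (fun z => X z i) q (Y q)

lemma fderiv_cos_diff (q v : Fin 4 → ℝ) :
    fderiv ℝ (fun z : Fin 4 → ℝ => cos (z 1 - z 0)) q v
      = -sin (q 1 - q 0) * (v 1 - v 0) := by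
  have hL : HasFDerivAt (fun z : Fin 4 → ℝ => z 1 - z 0)
      ((ContinuousLinearMap.proj 1 : (Fin 4 → ℝ) →L[ℝ] ℝ) -
        ContinuousLinearMap.proj 0) q := by
    have := ((ContinuousLinearMap.proj (1 : Fin 4) : (Fin 4 → ℝ) →L[ℝ] ℝ) -
      ContinuousLinearMap.proj (0 : Fin 4)).hasFDerivAt (x := q)
    exact this
  have h := hL.cos
  rw [h.fderiv]
  simp [mul_sub]

/-- The 1-form `λ = cos(α₂-α₁)(dα₁+dα₂) + dp₁ - dp₂` on `ℝ⁴` with coordinates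
`(α₁, α₂, p₁, p₂)`, restricted to the submanifold `{p₁+p₂ = sin(α₂-α₁)}`, is a contact
form wherever `sin(α₂-α₁) ≠ 0`: it annihilates the vector fields
`ξ₁ = ∂α₁ - cos(α₂-α₁)∂p₁` and `ξ₂ = ∂α₂ + cos(α₂-α₁)∂p₂`, but is nonzero on their
Lie bracket. -/
theorem contact_form_parallelograms
    (lam : (Fin 4 → ℝ) → (Fin 4 → ℝ) → ℝ)
    (hlam : ∀ q v, lam q v = cos (q 1 - q 0) * (v 0 + v 1) + v 2 - v 3)
    (ξ₁ ξ₂ : (Fin 4 → ℝ) → (Fin 4 → ℝ))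
    (hξ₁ : ∀ q, ξ₁ q = ![1, 0, -cos (q 1 - q 0), 0])
    (hξ₂ : ∀ q, ξ₂ q = ![0, 1, 0, cos (q 1 - q 0)]) :
    ∀ q : Fin 4 → ℝ, q 2 + q 3 = sin (q 1 - q 0) →
      lam q (ξ₁ q) = 0 ∧ lam q (ξ₂ q) = 0
      ∧ (sin (q 1 - q 0) ≠ 0 → lam q (lieBracket ξ₁ ξ₂ q) ≠ 0) := by
  intro q _
  have e10 : (fun z => ξ₁ z 0) = fun _ : Fin 4 → ℝ => (1 : ℝ) := by
    funext z; rw [hξ₁]; simp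
  have e11 : (fun z => ξ₁ z 1) = fun _ : Fin 4 → ℝ => (0 : ℝ) := by
    funext z; rw [hξ₁]; simp
  have e12 : (fun z => ξ₁ z 2) = fun z : Fin 4 → ℝ => -cos (z 1 - z 0) := by
    funext z; rw [hξ₁]; simp
  have e13 : (fun z => ξ₁ z 3) = fun _ : Fin 4 → ℝ => (0 : ℝ) := by
    funext z; rw [hξ₁]; simp
  have e20 : (fun z => ξ₂ z 0) = fun _ : Fin 4 → ℝ => (0 : ℝ) := by
    funext z; rw [hξ₂]; simp
  have e21 : (fun z => ξ₂ z 1) = fun _ : Fin 4 → ℝ => (1 : ℝ) := by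
    funext z; rw [hξ₂]; simp
  have e22 : (fun z => ξ₂ z 2) = fun _ : Fin 4 → ℝ => (0 : ℝ) := by
    funext z; rw [hξ₂]; simp
  have e23 : (fun z => ξ₂ z 3) = fun z : Fin 4 → ℝ => cos (z 1 - z 0) := by
    funext z; rw [hξ₂]; simp
  have hneg : ∀ v, fderiv ℝ (fun z : Fin 4 → ℝ => -cos (z 1 - z 0)) q v
      = sin (q 1 - q 0) * (v 1 - v 0) := by
    intro v
    rw [fderiv_fun_neg, ContinuousLinearMap.neg_apply, fderiv_cos_diff]
    ring
  have hb : ∀ i, lieBracket ξ₁ ξ₂ q i =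
      ![0, 0, -sin (q 1 - q 0), sin (q 1 - q 0)] i := by
    intro i
    fin_cases i <;>
      simp only [lieBracket, e10, e11, e12, e13, e20, e21, e22, e23] <;>
      simp [fderiv_const, fderiv_cos_diff, hneg, hξ₁, hξ₂]
  refine ⟨by rw [hlam, hξ₁]; simp, by rw [hlam, hξ₂]; simp, ?_⟩
  intro hs
  rw [hlam, hb 0, hb 1, hb 2, hb 3]
  simp
  intro h
  exact hs (by linarith)
end
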